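/- Let k be a finite set of flow constraints and A a set of atoms that cuts every Src-to-Snk path in k (i.e., every such path contains an atom of A). Then the constraint set k \ A, obtained by deleting all edges incident to atoms in A, contains no Src-to-Snk path, and hence is satisfiable. -/

import Mathlib

/-- Nodes of the constraint graph: the transient source `Src` (T), the stable
sink `Snk` (S), and the atoms. -/
inductive Node (A : Type) where
  | Src : Node A
  | Snk : Node A
  | atom : A → Node A

/-- `l` is a path from `u` to `v` in the constraint (edge) set `k`:
a finite nonempty sequence of nodes starting at `u`, ending at `v`, with each
consecutive pair an edge of `k`. -/
def IsPathFrom {A : Type} (k : Set (Node A × Node A)) (u v : Node A)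
    (l : List (Node A)) : Prop :=
  List.Chain' (fun x y => (x, y) ∈ k) l ∧ l.head? = some u ∧ l.getLast? = some v

/-- There is a path from `u` to `v` in `k`. -/
def Reaches {A : Type} (k : Set (Node A × Node A)) (u v : Node A) : Prop :=
  ∃ l, IsPathFrom k u v l

/-- Extend a solution (atoms to the two-point lattice, `false = S ⊑ true = T`)
to all nodes, interpreting `Src` as `T` and `Snk` as `S`. -/
def extSol {A : Type} (σ : A → Bool) : Node A → Bool
  | .Src => true
  | .Snk => false
  | .atom a => σ a

/-- `σ` satisfies every constraint (edge) `u → v` of `k`: `σ(u) ⊑ σ(v)`. -/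
def Satisfies {A : Type} (k : Set (Node A × Node A)) (σ : A → Bool) : Prop :=
  ∀ e ∈ k, extSol σ e.1 ≤ extSol σ e.2

/-- The set of atoms `As` cuts the path `l`: some atom of `As` occurs on `l`. -/
def CutsList {A : Type} (As : Set A) (l : List (Node A)) : Prop :=
  ∃ a ∈ As, Node.atom a ∈ l

/-- `As` is a cut-set for `k`: it cuts every `Src`-to-`Snk` path of `k`. -/
def IsCutSet {A : Type} (As : Set A) (k : Set (Node A × Node A)) : Prop :=
  ∀ l, IsPathFrom k Node.Src Node.Snk l → CutsList As l

/-- The edge `e` is incident to an atom of `As`. -/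
def Incident {A : Type} (As : Set A) (e : Node A × Node A) : Prop :=
  (∃ a ∈ As, e.1 = Node.atom a) ∨ (∃ a ∈ As, e.2 = Node.atom a)

-- The canonical assignment: `T` iff `Src` reaches the atom in `k`.
open Classical in
noncomputable def canonSol {A : Type} (k : Set (Node A × Node A)) : A → Bool :=
  fun a => if Reaches k Node.Src (Node.atom a) then true else false

theorem List.IsChain.exists_rel_of_mem_of_ne_head {α : Type*} {R : α → α → Prop} :
    ∀ {l : List α} {u x : α}, l.IsChain R → l.head? = some u → x ∈ l → x ≠ u → ∃ y, R y x
  | [], _, _, _, _, hx, _ => absurd hx List.not_mem_nil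
  | [_], _, _, _, hu, hx, hne => by simp_all
  | a :: b :: l, u, x, hc, hu, hx, hne => by
    obtain rfl : a = u := by simpa using hu
    rcases List.mem_cons.1 hx with rfl | hx
    · exact absurd rfl hne
    by_cases hxb : x = b
    · exact ⟨_, hxb ▸ (List.isChain_cons_cons.1 hc).1⟩
    · exact hc.tail.exists_rel_of_mem_of_ne_head rfl hx hxb

section Paths

variable {A : Type} {k : Set (Node A × Node A)}

theorem IsPathFrom.mono {k' : Set (Node A × Node A)} (hk : k ⊆ k') {u v : Node A}
    {l : List (Node A)} (h : IsPathFrom k u v l) : IsPathFrom k' u v l :=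
  ⟨h.1.imp fun _ _ he => hk he, h.2⟩

theorem Reaches.refl (u : Node A) : Reaches k u u :=
  ⟨[u], List.isChain_singleton _, rfl, rfl⟩

theorem Reaches.tail {u v w : Node A} (h : Reaches k u v) (he : (v, w) ∈ k) :
    Reaches k u w := by
  obtain ⟨l, hc, hu, hv⟩ := h
  refine ⟨l ++ [w], hc.append (List.isChain_singleton w) ?_, ?_, by simp⟩
  · simp_all
  · cases l <;> simp_all

end Paths

section CanonicalSolution

variable {A : Type} {k : Set (Node A × Node A)}

theorem extSol_canonSol_eq_true_iff (hk : ¬ Reaches k Node.Src Node.Snk) (x : Node A) :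
    extSol (canonSol k) x = true ↔ Reaches k Node.Src x := by
  cases x with
  | Src => exact iff_of_true rfl (Reaches.refl _)
  | Snk => exact iff_of_false Bool.false_ne_true hk
  | atom a => simp [extSol, canonSol]

-- Reachability from `Src` is closed along edges, and `Snk` is not reachable.
theorem satisfies_canonSol_of_not_reaches (hk : ¬ Reaches k Node.Src Node.Snk) :
    Satisfies k (canonSol k) := by
  rintro ⟨u, v⟩ he
  simp only [Bool.le_iff_imp, extSol_canonSol_eq_true_iff hk]
  exact fun hu => hu.tail he

end CanonicalSolution

/-- A `Src`-to-`Snk` path meets the cut-set at some atom, which is not `Src`, so the path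
enters it along an edge; that edge is incident to the cut-set and has been deleted. -/
theorem IsCutSet.not_reaches_of_delete_incident {A : Type} {As : Set A}
    {k : Set (Node A × Node A)} (hcut : IsCutSet As k) :
    ¬ Reaches {e ∈ k | ¬ Incident As e} Node.Src Node.Snk := by
  rintro ⟨l, hl⟩
  obtain ⟨a, haA, hal⟩ := hcut l (hl.mono fun _ he => he.1)
  obtain ⟨y, -, hy⟩ := hl.1.exists_rel_of_mem_of_ne_head hl.2.1 hal nofun
  exact hy (Or.inr ⟨a, haA, rfl⟩)

theorem cutSet_delete_no_path_and_satisfiable_general {A : Type}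
    (k : Set (Node A × Node A))
    (As : Set A) (hcut : IsCutSet As k) :
    ¬ Reaches {e ∈ k | ¬ Incident As e} Node.Src Node.Snk ∧
      ∃ σ : A → Bool, Satisfies {e ∈ k | ¬ Incident As e} σ := by
  have hnp := hcut.not_reaches_of_delete_incident
  exact ⟨hnp, canonSol _, satisfies_canonSol_of_not_reaches hnp⟩

/-- Deleting from `k` all edges incident to a cut-set `As` yields a constraint
set with no `Src`-to-`Snk` path, and hence a satisfiable one. -/
theorem cutSet_delete_no_path_and_satisfiable {A : Type}
    (k : Set (Node A × Node A)) (hfin : k.Finite)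
    (As : Set A) (hcut : IsCutSet As k) :
    ¬ Reaches {e ∈ k | ¬ Incident As e} Node.Src Node.Snk ∧
      ∃ σ : A → Bool, Satisfies {e ∈ k | ¬ Incident As e} σ :=
  cutSet_delete_no_path_and_satisfiable_general k As hcut
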